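/- Let R be a commutative noetherian local ring, M a finitely generated R-module, and T the torsion submodule of a finitely generated R-module N. If M ⊗_R N is torsion-free and Tor_1^R(M, N/T) = 0, then M ⊗_R T = 0; if moreover Supp M = Spec R (e.g. M ≠ 0 faithful with full support), then T = 0, i.e., N is torsion-free. -/

import Mathlib

/-!
Vanishing of `Tor₁(M, N/T)` makes `M ⊗ T → M ⊗ N` injective: compare a projective resolution
`P` of `N/T` with `0 → T → N → N/T → 0` through a lift `P₀ → N`. As `M ⊗ T` is torsion and
`M ⊗ N` is torsion-free, that map is also zero, so `M ⊗ T = 0`. Over a local ring two nonzero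
finite modules both surject onto the residue field, so their tensor product is nonzero; hence
`T = 0` once `M ≠ 0`.
-/

open CategoryTheory TensorProduct IsLocalRing

noncomputable def TorM (R : Type) [CommRing R] (i : ℕ)
    (M N : Type) [AddCommGroup M] [Module R M] [AddCommGroup N] [Module R N] : ModuleCat R :=
  ((Tor (ModuleCat R) i).obj (ModuleCat.of R M)).obj (ModuleCat.of R N)

open LinearMap

section

variable {R M : Type*} [CommRing R] [AddCommGroup M] [Module R M]

theorem lTensor_subtype_injective_of_exact {P₂ P₁ P₀ : Type*}
    [AddCommGroup P₂] [Module R P₂] [AddCommGroup P₁] [Module R P₁]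
    [AddCommGroup P₀] [Module R P₀]
    {d₂ : P₂ →ₗ[R] P₁} {d₁ : P₁ →ₗ[R] P₀} {K : Submodule R P₀}
    (hd₁ : range d₁ = K) (hd : d₁ ∘ₗ d₂ = 0)
    (hM : Function.Exact (d₂.lTensor M) (d₁.lTensor M)) :
    Function.Injective (K.subtype.lTensor M) := by
  have hmem (x : P₁) : d₁ x ∈ K := hd₁ ▸ mem_range_self d₁ x
  let θ : P₁ →ₗ[R] K := d₁.codRestrict K hmem
  have hθ : Function.Surjective θ := by
    rintro ⟨y, hy⟩
    obtain ⟨x, rfl⟩ := (hd₁ ▸ hy : y ∈ range d₁)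
    exact ⟨x, rfl⟩
  have hθd₂ : θ ∘ₗ d₂ = 0 := by
    ext x
    exact congr($hd x)
  rw [injective_iff_map_eq_zero]
  intro z hz
  obtain ⟨w, rfl⟩ := lTensor_surjective M hθ z
  obtain ⟨v, rfl⟩ := (hM w).mp (by rwa [← lTensor_comp_apply] at hz)
  rw [← lTensor_comp_apply, hθd₂, lTensor_zero, LinearMap.zero_apply]

theorem lTensor_subtype_injective_of_comap {P N : Type*}
    [AddCommGroup P] [Module R P] [AddCommGroup N] [Module R N]
    (φ : P →ₗ[R] N) (T : Submodule R N) (hφ : Function.Surjective (T.mkQ ∘ₗ φ))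
    (hinj : Function.Injective ((T.comap φ).subtype.lTensor M)) :
    Function.Injective (T.subtype.lTensor M) := by
  -- `0 → T.comap φ → P × T → N → 0` is exact, and `M ⊗ -` keeps it exact except at the left end.
  let K := T.comap φ
  let u : K →ₗ[R] P × T := K.subtype.prod (-φ.restrict fun _ hx ↦ hx)
  let ρ : P × T →ₗ[R] N := φ.coprod T.subtype
  have hρ : Function.Surjective ρ := by
    intro n
    obtain ⟨p, hp⟩ := hφ (T.mkQ n)
    obtain ⟨t, ht⟩ : ∃ t : T, (t : N) = n - φ p :=
      ⟨⟨n - φ p, (Submodule.Quotient.eq T).mp hp.symm⟩, rfl⟩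
    exact ⟨(p, t), by simp [ρ, ht]⟩
  have hexact : Function.Exact u ρ := by
    rintro ⟨p, t⟩
    constructor
    · intro h
      have hpt : φ p = -t := eq_neg_of_add_eq_zero_left h
      have hp : p ∈ K := by simp [K, hpt]
      exact ⟨⟨p, hp⟩, by ext <;> simp [u, hpt]⟩
    · rintro ⟨k, hk⟩
      simp [← hk, u, ρ]
  rw [injective_iff_map_eq_zero]
  intro x hx
  have hX : (ρ.lTensor M) ((inr R P T).lTensor M x) = 0 := by
    rw [← lTensor_comp_apply, show ρ ∘ₗ inr R P T = T.subtype from coprod_inr _ _, hx]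
  obtain ⟨z, hz⟩ := (lTensor_exact M hexact hρ _).mp hX
  have hz0 : z = 0 := hinj <| by
    rw [map_zero, show K.subtype = fst R P T ∘ₗ u from (fst_prod _ _).symm, lTensor_comp_apply, hz,
      ← lTensor_comp_apply, fst_comp_inr, lTensor_zero, LinearMap.zero_apply]
  rw [← lTensor_id_apply M T x, ← snd_comp_inr R P T, lTensor_comp_apply, ← hz, hz0, map_zero,
    map_zero]

end

theorem lTensor_exact_of_subsingleton_tor {R : Type} [CommRing R] (M : Type) {Q : Type}
    [AddCommGroup M] [Module R M] [AddCommGroup Q] [Module R Q]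
    (hTor : Subsingleton (TorM R 1 M Q)) (P : ProjectiveResolution (ModuleCat.of R Q)) :
    Function.Exact ((P.complex.d 2 1).hom.lTensor M) ((P.complex.d 1 0).hom.lTensor M) := by
  let F := (MonoidalCategory.tensoringLeft (ModuleCat R)).obj (ModuleCat.of R M)
  let C := (F.mapHomologicalComplex (ComplexShape.down ℕ)).obj P.complex
  have hC : C.ExactAt 1 := by
    rw [HomologicalComplex.exactAt_iff_isZero_homology]
    exact (@ModuleCat.isZero_of_subsingleton _ _ ((F.leftDerived 1).obj _) hTor).of_iso
      (P.isoLeftDerivedObj F 1).symm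
  rw [HomologicalComplex.exactAt_iff' C 2 1 0 (by simp) (by simp)] at hC
  exact (ShortComplex.ShortExact.moduleCat_exact_iff_function_exact _).mp hC

theorem lTensor_subtype_injective_of_subsingleton_tor {R : Type} [CommRing R] (M : Type)
    {N : Type} [AddCommGroup M] [Module R M] [AddCommGroup N] [Module R N] (T : Submodule R N)
    (hTor : Subsingleton (TorM R 1 M (N ⧸ T))) :
    Function.Injective (T.subtype.lTensor M) := by
  let P : ProjectiveResolution (ModuleCat.of R (N ⧸ T)) := HasProjectiveResolution.out.some
  let ε : P.complex.X 0 →ₗ[R] N ⧸ T := (P.π.f 0).hom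
  have hε : Function.Surjective ε := (ModuleCat.epi_iff_surjective (P.π.f 0)).mp inferInstance
  have hd₁ : range (P.complex.d 1 0).hom = ker ε :=
    (ShortComplex.moduleCat_exact_iff_range_eq_ker _).mp
      (ShortComplex.exact_of_g_is_cokernel
        (ShortComplex.mk (P.complex.d 1 0) (P.π.f 0) P.complex_d_comp_π_f_zero)
        P.isColimitCokernelCofork)
  have hd : (P.complex.d 1 0).hom ∘ₗ (P.complex.d 2 1).hom = 0 :=
    congr(ModuleCat.Hom.hom $(P.complex.d_comp_d 2 1 0))
  have : Module.Projective R (P.complex.X 0) :=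
    (IsProjective.iff_projective _).mpr (P.projective 0)
  obtain ⟨φ, hφ⟩ := Module.projective_lifting_property T.mkQ ε T.mkQ_surjective
  have hK : ker ε = T.comap φ := by rw [← hφ, ker_comp, Submodule.ker_mkQ]
  refine lTensor_subtype_injective_of_comap φ T (hφ ▸ hε) ?_
  exact hK ▸ lTensor_subtype_injective_of_exact hd₁ hd (lTensor_exact_of_subsingleton_tor M hTor P)

theorem Module.IsTorsion.tensorProduct_right {R : Type*} [CommRing R] (M : Type*) {N : Type*}
    [AddCommGroup M] [Module R M] [AddCommGroup N] [Module R N] (hN : Module.IsTorsion R N) :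
    Module.IsTorsion R (M ⊗[R] N) := by
  intro x
  induction x with
  | zero => exact ⟨1, smul_zero _⟩
  | tmul m n =>
    obtain ⟨a, ha⟩ := @hN n
    exact ⟨a, by rw [Submonoid.smul_def, ← tmul_smul, ← Submonoid.smul_def, ha, tmul_zero]⟩
  | add x y hx hy =>
    obtain ⟨a, ha⟩ := hx
    obtain ⟨b, hb⟩ := hy
    exact ⟨a * b, by rw [smul_add, mul_comm, mul_smul, ha, mul_comm, mul_smul, hb, smul_zero,
      smul_zero, add_zero]⟩

theorem LinearMap.eq_zero_of_isTorsion_of_torsion_eq_bot {R A B : Type*} [CommRing R]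
    [AddCommGroup A] [Module R A] [AddCommGroup B] [Module R B] (f : A →ₗ[R] B)
    (hA : Module.IsTorsion R A) (hB : Submodule.torsion R B = ⊥) : f = 0 := by
  ext x
  obtain ⟨a, ha⟩ := @hA x
  have : f x ∈ Submodule.torsion R B := ⟨a, by rw [← map_smul_of_tower, ha, map_zero]⟩
  simpa [hB] using this

theorem IsLocalRing.exists_surjective_residueField {R A : Type*} [CommRing R] [IsLocalRing R]
    [AddCommGroup A] [Module R A] [Module.Finite R A] [Nontrivial A] :
    ∃ f : A →ₗ[R] R ⧸ maximalIdeal R, Function.Surjective f := by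
  obtain ⟨I, f, hI, hf⟩ := Module.exists_surjective_quotient_of_finite R A
  exact ⟨Submodule.factor (le_maximalIdeal hI) ∘ₗ f,
    (Submodule.factor_surjective (le_maximalIdeal hI)).comp hf⟩

theorem IsLocalRing.nontrivial_tensorProduct {R A B : Type*} [CommRing R] [IsLocalRing R]
    [AddCommGroup A] [Module R A] [AddCommGroup B] [Module R B]
    [Module.Finite R A] [Module.Finite R B] [Nontrivial A] [Nontrivial B] :
    Nontrivial (A ⊗[R] B) := by
  obtain ⟨f, hf⟩ := exists_surjective_residueField (R := R) (A := A)
  obtain ⟨g, hg⟩ := exists_surjective_residueField (R := R) (A := B)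
  let ψ := LinearMap.mul' R (R ⧸ maximalIdeal R) ∘ₗ TensorProduct.map f g
  have hψ : Function.Surjective ψ := by
    intro x
    obtain ⟨a, rfl⟩ := hf x
    obtain ⟨b, hb⟩ := hg 1
    exact ⟨a ⊗ₜ b, by simp [ψ, hb]⟩
  have : Nontrivial (R ⧸ maximalIdeal R) :=
    Ideal.Quotient.nontrivial_iff.mpr (maximalIdeal.isMaximal R).ne_top
  exact hψ.nontrivial

/-- Let `T` be the torsion submodule of `N`. If `M ⊗_R N` is torsion-free and
`Tor₁(M, N/T) = 0`, then `M ⊗_R T = 0`; if moreover `M` has full support, then `T = 0`. -/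
theorem torsion_eq_bot_of_torsionFree_tensor
    (R : Type) [CommRing R] [IsNoetherianRing R] [IsLocalRing R]
    (M N : Type) [AddCommGroup M] [Module R M] [AddCommGroup N] [Module R N]
    [Module.Finite R M] [Module.Finite R N]
    (htf : Submodule.torsion R (M ⊗[R] N) = ⊥)
    (htor1 : Subsingleton (TorM R 1 M (N ⧸ Submodule.torsion R N))) :
    Subsingleton (M ⊗[R] (Submodule.torsion R N)) ∧
      ((∀ (p : Ideal R) (hp : p.IsPrime),
          ¬ Subsingleton (LocalizedModule p.primeCompl M)) →
        Submodule.torsion R N = ⊥) := by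
  set T := Submodule.torsion R N
  have hinj : Function.Injective (T.subtype.lTensor M) :=
    lTensor_subtype_injective_of_subsingleton_tor M T htor1
  have hzero : T.subtype.lTensor M = 0 :=
    (T.subtype.lTensor M).eq_zero_of_isTorsion_of_torsion_eq_bot
      (Submodule.torsion_isTorsion.tensorProduct_right M) htf
  have hsub : Subsingleton (M ⊗[R] T) := by
    rw [hzero] at hinj
    exact ⟨fun x y ↦ hinj rfl⟩
  refine ⟨hsub, fun hsupp ↦ ?_⟩
  have : Nontrivial M := not_subsingleton_iff_nontrivial.mp fun _ ↦
    hsupp (maximalIdeal R) (maximalIdeal.isMaximal R).isPrime inferInstance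
  by_contra hT
  have : Nontrivial T := Submodule.nontrivial_iff_ne_bot.mpr hT
  have := IsLocalRing.nontrivial_tensorProduct (R := R) (A := M) (B := T)
  exact not_subsingleton (M ⊗[R] T) hsub
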